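/- Let k ≥ 1 and σ ≥ k+1, let β > 0, and let N ≥ 4 be an even integer with ε ≤ N^{−1} and τ = (σ ε / β) ln N ≤ 1/2. Consider the Shishkin mesh x_i = 2(1−τ)i/N for 0 ≤ i ≤ N/2 and x_i = 1−τ + 2τ(i − N/2)/N for N/2 < i ≤ N, with elements I_i = [x_{i−1}, x_i]. Let u ∈ C^{k+2}([0,1]) admit a decomposition u = S + E with |S^{(m)}(x)| ≤ C_d and |E^{(m)}(x)| ≤ C_d ε^{−m} e^{−β(1−x)/ε} for all 0 ≤ m ≤ k+2 and x ∈ [0,1], and let P⁻u be its elementwise Gauss–Radau projection. Then there is a constant C depending only on k, β, σ, C_d (and not on ε or N) such that sup_{x ∈ I_i} |u(x) − (P⁻u)(x)| ≤ C N^{−(k+1)} for every 1 ≤ i ≤ N/2. -/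

import Mathlib

/-!
On an element `[a, b]` the Gauss–Radau projection reproduces polynomials of degree `≤ k`, and after
the affine change of variables to `[0, 1]` it is a fixed linear map on a finite-dimensional space,
injective because a polynomial of degree `≤ k` orthogonal to degree `< k` and vanishing at `b` is
`(X - b) r` with `∫ (b - t) r² = 0`. Hence `‖v - P⁻v‖_∞ ≤ (1 + Λ) ‖v - r‖_∞` for every polynomial
`r` of degree `≤ k`, with `Λ` independent of the element. On a coarse element of length `≤ 2/N`
take `r` the Taylor polynomial of the smooth part `S`, which is `O(N^{-(k+1)})`-close to `S`;
the layer part `E` is itself `O(N^{-σ})` there, since `1 - x ≥ τ = σ ε ln N / β`.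
-/

open Set Polynomial MeasureTheory

theorem integral_mul_eval_eq_zero_of_moments {f : ℝ → ℝ} {a b : ℝ} {n : ℕ}
    (hf : IntervalIntegrable f volume a b)
    (hmom : ∀ j < n, ∫ t in a..b, f t * t ^ j = 0) {q : ℝ[X]} (hq : q.natDegree < n) :
    ∫ t in a..b, f t * q.eval t = 0 := by
  have hexpand : (fun t => f t * q.eval t) =
      fun t => ∑ j ∈ Finset.range n, q.coeff j * (f t * t ^ j) := by
    ext t
    rw [eval_eq_sum_range' hq, Finset.mul_sum]
    exact Finset.sum_congr rfl fun j _ => by ring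
  rw [hexpand, intervalIntegral.integral_finsetSum fun j _ =>
    (hf.mul_continuousOn (continuous_pow j).continuousOn).const_mul _]
  exact Finset.sum_eq_zero fun j hj => by
    rw [intervalIntegral.integral_const_mul, hmom j (Finset.mem_range.mp hj), mul_zero]

theorem Polynomial.eq_zero_of_orthogonal_of_eval_eq_zero {a b : ℝ} (hab : a < b) {k : ℕ}
    {p : ℝ[X]} (hp : p.natDegree ≤ k)
    (horth : ∀ q : ℝ[X], q.natDegree < k → ∫ t in a..b, p.eval t * q.eval t = 0)
    (hb : p.eval b = 0) : p = 0 := by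
  by_contra hp0
  obtain ⟨r, rfl⟩ := dvd_iff_isRoot.mpr hb
  have hr : r ≠ 0 := right_ne_zero_of_mul hp0
  have hr_deg : r.natDegree < k := by
    rw [natDegree_mul (X_sub_C_ne_zero b) hr, natDegree_X_sub_C] at hp
    omega
  obtain ⟨c, hc, hrc⟩ := (Ioo_infinite hab).exists_notMem_finset r.roots.toFinset
  have hrc : r.eval c ≠ 0 := by simpa [hr] using hrc
  -- `p * r = (X - b) * r ^ 2` has a sign on `[a, b]`, and does not vanish at `c`
  have hpos : 0 < ∫ t in a..b, (b - t) * r.eval t ^ 2 :=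
    intervalIntegral.integral_pos hab (by fun_prop)
      (fun t ht => mul_nonneg (by linarith [ht.2]) (sq_nonneg _))
      ⟨c, Ioo_subset_Icc_self hc, mul_pos (by linarith [hc.2]) (by positivity)⟩
  have hneg : ∫ t in a..b, (b - t) * r.eval t ^ 2 =
      -∫ t in a..b, ((X - C b) * r).eval t * r.eval t := by
    rw [← intervalIntegral.integral_neg]
    congr 1 with t
    simp only [eval_mul, eval_sub, eval_X, eval_C]
    ring
  linarith [horth r hr_deg]

theorem Polynomial.abs_eval_le_mul_norm_degreeLTEquiv {n : ℕ} {p : ℝ[X]} (hp : p ∈ degreeLT ℝ n)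
    {s : ℝ} (hs : |s| ≤ 1) : |p.eval s| ≤ n * ‖degreeLTEquiv ℝ n ⟨p, hp⟩‖ := by
  rw [eval_eq_sum_degreeLTEquiv hp]
  calc |∑ i, degreeLTEquiv ℝ n ⟨p, hp⟩ i * s ^ (i : ℕ)|
      ≤ ∑ i, |degreeLTEquiv ℝ n ⟨p, hp⟩ i * s ^ (i : ℕ)| := Finset.abs_sum_le_sum_abs _ _
    _ ≤ ∑ _i : Fin n, ‖degreeLTEquiv ℝ n ⟨p, hp⟩‖ := by
      gcongr with i
      rw [abs_mul, abs_pow]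
      exact (mul_le_of_le_one_right (abs_nonneg _) (pow_le_one₀ (abs_nonneg s) hs)).trans
        (by simpa using norm_le_pi_norm (degreeLTEquiv ℝ n ⟨p, hp⟩) i)
    _ = n * ‖degreeLTEquiv ℝ n ⟨p, hp⟩‖ := by simp

structure IsGaussRadauProj (k : ℕ) (a b : ℝ) (v : ℝ → ℝ) (p : ℝ[X]) : Prop where
  natDegree_le : p.natDegree ≤ k
  integral_mul_eval : ∀ q : ℝ[X], q.natDegree ≤ k - 1 →
    ∫ t in a..b, p.eval t * q.eval t = ∫ t in a..b, v t * q.eval t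
  eval_right : p.eval b = v b

namespace IsGaussRadauProj

variable {k : ℕ} {a b : ℝ} {v : ℝ → ℝ} {p : ℝ[X]}

theorem sub_polynomial (h : IsGaussRadauProj k a b v p) (hv : ContinuousOn v (uIcc a b))
    {r : ℝ[X]} (hr : r.natDegree ≤ k) :
    IsGaussRadauProj k a b (fun t => v t - r.eval t) (p - r) where
  natDegree_le := (natDegree_sub_le p r).trans (max_le h.natDegree_le hr)
  integral_mul_eval q hq := by
    have hint : ∀ s : ℝ[X], IntervalIntegrable (fun t => s.eval t * q.eval t) volume a b :=
      fun s => (by fun_prop : Continuous _).intervalIntegrable a b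
    have hvq : IntervalIntegrable (fun t => v t * q.eval t) volume a b :=
      (hv.mul q.continuous.continuousOn).intervalIntegrable
    simp only [eval_sub, sub_mul]
    rw [intervalIntegral.integral_sub (hint p) (hint r), intervalIntegral.integral_sub hvq (hint r),
      h.integral_mul_eval q hq]
  eval_right := by rw [eval_sub, h.eval_right]

theorem comp_affine (h : IsGaussRadauProj k a b v p) (hab : a ≠ b) :
    IsGaussRadauProj k 0 1 (fun s => v ((b - a) * s + a)) (p.comp (C (b - a) * X + C a)) where
  natDegree_le := natDegree_comp_le.trans <| by
    nlinarith [h.natDegree_le, natDegree_linear_le (a := b - a) (b := a)]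
  integral_mul_eval q hq := by
    have hba : b - a ≠ 0 := sub_ne_zero.mpr hab.symm
    have hsubst : ∀ g : ℝ → ℝ,
        ∫ s in (0:ℝ)..1, g ((b - a) * s + a) = (b - a)⁻¹ * ∫ t in a..b, g t :=
      fun g => by simp [intervalIntegral.integral_comp_mul_add g hba]
    set q' := q.comp (C (b - a)⁻¹ * X + C (-(b - a)⁻¹ * a))
    have hq' : q'.natDegree ≤ k - 1 := natDegree_comp_le.trans <| by
      nlinarith [natDegree_linear_le (a := (b - a)⁻¹) (b := -(b - a)⁻¹ * a)]
    have hqq' : ∀ s : ℝ, q.eval s = q'.eval ((b - a) * s + a) := fun s => by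
      simp only [q', eval_comp, eval_add, eval_mul, eval_C, eval_X]
      congr 1
      field_simp
      ring
    simp only [eval_comp, eval_add, eval_mul, eval_C, eval_X, hqq']
    rw [hsubst (fun t => p.eval t * q'.eval t), hsubst (fun t => v t * q'.eval t),
      h.integral_mul_eval q' hq']
  eval_right := by simpa using h.eval_right

end IsGaussRadauProj

/-- The data that determine the Gauss–Radau projection on the reference element `[0, 1]`. -/
noncomputable def radauData (k : ℕ) : ℝ[X] →ₗ[ℝ] Fin (k + 1) → ℝ where
  toFun p j := if (j : ℕ) < k then ∫ s in (0:ℝ)..1, p.eval s * s ^ (j : ℕ) else p.eval 1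
  map_add' p q := by
    ext j
    simp only [Pi.add_apply, eval_add, add_mul]
    split_ifs
    · exact intervalIntegral.integral_add
        ((by fun_prop : Continuous fun s => p.eval s * s ^ (j : ℕ)).intervalIntegrable _ _)
        ((by fun_prop : Continuous fun s => q.eval s * s ^ (j : ℕ)).intervalIntegrable _ _)
    · rfl
  map_smul' c p := by
    ext j
    simp only [Pi.smul_apply, eval_smul, smul_eq_mul, RingHom.id_apply, mul_assoc]
    split_ifs
    · exact intervalIntegral.integral_const_mul c _
    · rfl

theorem eq_zero_of_radauData_eq_zero {k : ℕ} {p : ℝ[X]} (hp : p.natDegree ≤ k)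
    (h : radauData k p = 0) : p = 0 := by
  refine eq_zero_of_orthogonal_of_eval_eq_zero zero_lt_one hp (fun q hq => ?_) ?_
  · refine integral_mul_eval_eq_zero_of_moments
      ((by fun_prop : Continuous _).intervalIntegrable _ _) (fun j hj => ?_) hq
    simpa [radauData, hj] using congr_fun h ⟨j, by omega⟩
  · simpa [radauData] using congr_fun h (Fin.last k)

theorem IsGaussRadauProj.norm_radauData_le {k : ℕ} {v : ℝ → ℝ} {p : ℝ[X]} {B : ℝ}
    (h : IsGaussRadauProj k 0 1 v p) (hB : ∀ s ∈ Icc (0:ℝ) 1, |v s| ≤ B) :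
    ‖radauData k p‖ ≤ B := by
  refine (pi_norm_le_iff_of_nonneg ((abs_nonneg _).trans (hB 1 (by simp)))).mpr fun j => ?_
  simp only [radauData, LinearMap.coe_mk, AddHom.coe_mk, Real.norm_eq_abs]
  split_ifs with hj
  · have hmom := h.integral_mul_eval (X ^ (j : ℕ)) (by simp; omega)
    simp only [eval_pow, eval_X] at hmom
    rw [hmom]
    have hbound : ∀ s ∈ uIoc (0:ℝ) 1, ‖v s * s ^ (j : ℕ)‖ ≤ B := fun s hs => by
      rw [uIoc_of_le zero_le_one] at hs
      rw [norm_mul, norm_pow, Real.norm_eq_abs, Real.norm_eq_abs, abs_of_pos hs.1]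
      exact (mul_le_of_le_one_right (abs_nonneg _) (pow_le_one₀ hs.1.le hs.2)).trans
        (hB s (Ioc_subset_Icc_self hs))
    simpa using intervalIntegral.norm_integral_le_of_norm_le_const hbound
  · rw [h.eval_right]
    exact hB 1 (by simp)

/-- `radauData k` is injective on polynomials of degree `≤ k`, hence has a bounded inverse there. -/
theorem exists_abs_eval_le_of_isGaussRadauProj_zero_one (k : ℕ) :
    ∃ Λ : ℝ, 0 ≤ Λ ∧ ∀ (v : ℝ → ℝ) (p : ℝ[X]) (B : ℝ), IsGaussRadauProj k 0 1 v p →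
      (∀ s ∈ Icc (0:ℝ) 1, |v s| ≤ B) → ∀ s ∈ Icc (0:ℝ) 1, |p.eval s| ≤ Λ * B := by
  let L := radauData k ∘ₗ (degreeLT ℝ (k + 1)).subtype ∘ₗ
    (degreeLTEquiv ℝ (k + 1)).symm.toLinearMap
  have hmem : ∀ p : ℝ[X], p ∈ degreeLT ℝ (k + 1) ↔ p.natDegree ≤ k := fun p => by
    rw [degreeLT_succ_eq_degreeLE, mem_degreeLE, natDegree_le_iff_degree_le]
  have hL : LinearMap.ker L = ⊥ := by
    refine LinearMap.ker_eq_bot'.mpr fun c hc => ?_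
    set P := (degreeLTEquiv ℝ (k + 1)).symm c
    have hP : (P : ℝ[X]) = 0 := eq_zero_of_radauData_eq_zero ((hmem P).mp P.2) hc
    exact (degreeLTEquiv ℝ (k + 1)).symm.map_eq_zero_iff.mp (Subtype.ext hP)
  obtain ⟨K, -, hK⟩ := L.exists_antilipschitzWith hL
  refine ⟨(k + 1) * K, by positivity, fun v p B h hB s hs => ?_⟩
  have hp : p ∈ degreeLT ℝ (k + 1) := (hmem p).mpr h.natDegree_le
  have hLp : L (degreeLTEquiv ℝ (k + 1) ⟨p, hp⟩) = radauData k p := by simp [L]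
  calc |p.eval s| ≤ (k + 1 : ℕ) * ‖degreeLTEquiv ℝ (k + 1) ⟨p, hp⟩‖ :=
        abs_eval_le_mul_norm_degreeLTEquiv hp (abs_le.mpr ⟨by linarith [hs.1], hs.2⟩)
    _ ≤ (k + 1 : ℕ) * (K * ‖radauData k p‖) := by
        gcongr
        rw [← hLp]
        exact ZeroHomClass.bound_of_antilipschitz L hK _
    _ ≤ (k + 1) * K * B := by
        push_cast
        rw [mul_assoc]
        gcongr
        exact h.norm_radauData_le hB

theorem exists_abs_eval_le_of_isGaussRadauProj (k : ℕ) :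
    ∃ Λ : ℝ, 0 ≤ Λ ∧ ∀ (a b : ℝ) (v : ℝ → ℝ) (p : ℝ[X]) (B : ℝ), a < b →
      IsGaussRadauProj k a b v p → (∀ t ∈ Icc a b, |v t| ≤ B) →
      ∀ t ∈ Icc a b, |p.eval t| ≤ Λ * B := by
  obtain ⟨Λ, hΛ, hstab⟩ := exists_abs_eval_le_of_isGaussRadauProj_zero_one k
  refine ⟨Λ, hΛ, fun a b v p B hab h hB t ht => ?_⟩
  have hba : 0 < b - a := sub_pos.mpr hab
  have hmaps : ∀ s ∈ Icc (0:ℝ) 1, (b - a) * s + a ∈ Icc a b := fun s hs =>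
    ⟨by nlinarith [hs.1], by nlinarith [hs.2]⟩
  have hs : (t - a) / (b - a) ∈ Icc (0:ℝ) 1 :=
    ⟨div_nonneg (by linarith [ht.1]) hba.le, (div_le_one hba).mpr (by linarith [ht.2])⟩
  have := hstab _ _ B (h.comp_affine hab.ne) (fun s hs => hB _ (hmaps s hs)) _ hs
  rwa [eval_comp, eval_add, eval_mul, eval_C, eval_X, eval_C, mul_div_cancel₀ _ hba.ne',
    sub_add_cancel] at this

theorem exists_abs_sub_eval_le_of_isGaussRadauProj (k : ℕ) :
    ∃ Λ : ℝ, 0 ≤ Λ ∧ ∀ (a b : ℝ) (v : ℝ → ℝ) (p r : ℝ[X]) (B : ℝ), a < b →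
      IsGaussRadauProj k a b v p → ContinuousOn v (Icc a b) → r.natDegree ≤ k →
      (∀ t ∈ Icc a b, |v t - r.eval t| ≤ B) →
      ∀ t ∈ Icc a b, |v t - p.eval t| ≤ (1 + Λ) * B := by
  obtain ⟨Λ, hΛ, hstab⟩ := exists_abs_eval_le_of_isGaussRadauProj k
  refine ⟨Λ, hΛ, fun a b v p r B hab h hv hr hB t ht => ?_⟩
  have hpr := hstab a b _ (p - r) B hab
    (h.sub_polynomial (by rwa [uIcc_of_le hab.le]) hr) hB t ht
  rw [eval_sub] at hpr
  calc |v t - p.eval t| ≤ |v t - r.eval t| + |p.eval t - r.eval t| := by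
        simpa [abs_sub_comm] using abs_sub_le (v t) (r.eval t) (p.eval t)
    _ ≤ B + Λ * B := add_le_add (hB t ht) hpr
    _ = (1 + Λ) * B := by ring

theorem iteratedDerivWithin_eq_of_subset {f : ℝ → ℝ} {s t : Set ℝ} {n : ℕ} {x : ℝ}
    (hst : s ⊆ t) (hs : UniqueDiffOn ℝ s) (ht : UniqueDiffOn ℝ t) (hf : ContDiffOn ℝ n f t)
    (hx : x ∈ s) :
    iteratedDerivWithin n f s x = iteratedDerivWithin n f t x := by
  rw [iteratedDerivWithin_eq_iteratedFDerivWithin, iteratedDerivWithin_eq_iteratedFDerivWithin,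
    iteratedFDerivWithin_subset hst hs ht hf hx]

/-- The Taylor polynomial at `a`, with Lagrange's remainder bound. -/
theorem exists_natDegree_le_abs_sub_eval_le {f : ℝ → ℝ} {s : Set ℝ} {a b M : ℝ} {n : ℕ}
    (hab : a < b) (hs : UniqueDiffOn ℝ s) (hsub : Icc a b ⊆ s) (hf : ContDiffOn ℝ (n + 1) f s)
    (hM : ∀ y ∈ s, |iteratedDerivWithin (n + 1) f s y| ≤ M) :
    ∃ r : ℝ[X], r.natDegree ≤ n ∧
      ∀ t ∈ Icc a b, |f t - r.eval t| ≤ M * (b - a) ^ (n + 1) / n.factorial := by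
  refine ⟨∑ m ∈ Finset.range (n + 1),
    C (iteratedDerivWithin m f (Icc a b) a / m.factorial) * (X - C a) ^ m, ?_, fun t ht => ?_⟩
  · refine natDegree_sum_le_of_forall_le _ _ fun m hm => (natDegree_C_mul_le _ _).trans ?_
    refine natDegree_pow_le.trans ?_
    rw [natDegree_X_sub_C, mul_one]
    exact Nat.lt_succ_iff.mp (Finset.mem_range.mp hm)
  have heval : (∑ m ∈ Finset.range (n + 1),
      C (iteratedDerivWithin m f (Icc a b) a / m.factorial) * (X - C a) ^ m).eval t
      = taylorWithinEval f n (Icc a b) a t := by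
    rw [taylor_within_apply, eval_finsetSum]
    refine Finset.sum_congr rfl fun m _ => ?_
    simp only [eval_mul, eval_C, eval_pow, eval_sub, eval_X, smul_eq_mul]
    ring
  have hM0 : 0 ≤ M := (abs_nonneg _).trans (hM a (hsub (left_mem_Icc.mpr hab.le)))
  rw [heval, ← Real.norm_eq_abs]
  refine (taylor_mean_remainder_bound (C := M) hab.le (hf.mono hsub) ht fun y hy => ?_).trans ?_
  · rw [iteratedDerivWithin_eq_of_subset hsub (uniqueDiffOn_Icc hab) hs hf hy]
    exact hM y (hsub hy)
  gcongr
  · linarith [ht.1]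
  · linarith [ht.2]

theorem shishkin_coarse_element {N i : ℕ} {τ : ℝ} {x : ℕ → ℝ} (hτ : 0 ≤ τ) (hτ1 : τ < 1)
    (hi : 1 ≤ i) (hiN : i ≤ N / 2) (hx : ∀ j ≤ N / 2, x j = 2 * (1 - τ) * j / N) :
    0 ≤ x (i - 1) ∧ x (i - 1) < x i ∧ x i ≤ 1 - τ ∧ x i - x (i - 1) ≤ 2 / N := by
  have hN : (0:ℝ) < N := by exact_mod_cast (show 0 < N by omega)
  have h2i : (2 * i : ℝ) ≤ N := by exact_mod_cast (show 2 * i ≤ N by omega)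
  have hi1 : (1:ℝ) ≤ i := by exact_mod_cast hi
  rw [hx i hiN, hx (i - 1) (by omega), Nat.cast_sub hi, Nat.cast_one]
  refine ⟨div_nonneg (by nlinarith) hN.le, by gcongr; linarith, ?_, ?_⟩
  · rw [div_le_iff₀ hN]; nlinarith
  · rw [← sub_div]; gcongr; nlinarith

theorem exp_boundary_layer_le {β ε σ t : ℝ} {k N : ℕ} (hβ : 0 < β) (hε : 0 < ε)
    (hσ : (k : ℝ) + 1 ≤ σ) (hN : 1 ≤ N) (ht : t ≤ 1 - σ * ε / β * Real.log N) :
    Real.exp (-β * (1 - t) / ε) ≤ ((N : ℝ) ^ (k + 1))⁻¹ := by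
  have hlog : 0 ≤ Real.log N := Real.log_nonneg (by exact_mod_cast hN)
  have hexponent : -β * (1 - t) / ε ≤ -(((k + 1 : ℕ) : ℝ) * Real.log N) := by
    rw [neg_mul, neg_div, neg_le_neg_iff, le_div_iff₀ hε]
    have : σ * ε / β * Real.log N * β = σ * Real.log N * ε := by field_simp
    push_cast
    nlinarith [mul_le_mul_of_nonneg_right hσ hlog]
  calc Real.exp (-β * (1 - t) / ε) ≤ Real.exp (-(((k + 1 : ℕ) : ℝ) * Real.log N)) :=
        Real.exp_le_exp.mpr hexponent
    _ = ((N : ℝ) ^ (k + 1))⁻¹ := by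
        rw [Real.exp_neg, Real.exp_nat_mul, Real.exp_log (by exact_mod_cast hN)]

theorem statement12_general (k : ℕ) (β σ Cd : ℝ)
    (hβ : 0 < β) (hσ : (k : ℝ) + 1 ≤ σ) (hCd : 0 < Cd) :
    ∃ C > 0, ∀ (N : ℕ) (ε τ : ℝ) (x : ℕ → ℝ) (u S E : ℝ → ℝ)
      (Pu : ℕ → Polynomial ℝ),
      4 ≤ N → N % 2 = 0 →
      0 < ε → ε ≤ (N : ℝ)⁻¹ →
      τ = σ * ε / β * Real.log N → τ ≤ 1 / 2 →
      (∀ i ≤ N / 2, x i = 2 * (1 - τ) * i / N) →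
      (∀ i, N / 2 < i → i ≤ N → x i = 1 - τ + 2 * τ * ((i : ℝ) - (N / 2 : ℕ)) / N) →
      ContDiffOn ℝ (k + 2 : ℕ) S (Icc 0 1) →
      ContDiffOn ℝ (k + 2 : ℕ) E (Icc 0 1) →
      (∀ t ∈ Icc (0:ℝ) 1, u t = S t + E t) →
      (∀ m ≤ k + 2, ∀ t ∈ Icc (0:ℝ) 1,
        |iteratedDerivWithin m S (Icc 0 1) t| ≤ Cd) →
      (∀ m ≤ k + 2, ∀ t ∈ Icc (0:ℝ) 1,
        |iteratedDerivWithin m E (Icc 0 1) t| ≤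
          Cd / ε ^ m * Real.exp (-β * (1 - t) / ε)) →
      (∀ i ∈ Finset.Icc 1 N, (Pu i).natDegree ≤ k) →
      (∀ i ∈ Finset.Icc 1 N, ∀ q : Polynomial ℝ, q.natDegree ≤ k - 1 →
        (∫ t in (x (i - 1))..(x i), (Pu i).eval t * q.eval t)
          = ∫ t in (x (i - 1))..(x i), u t * q.eval t) →
      (∀ i ∈ Finset.Icc 1 N, (Pu i).eval (x i) = u (x i)) →
      ∀ i ∈ Finset.Icc 1 (N / 2), ∀ t ∈ Icc (x (i - 1)) (x i),
        |u t - (Pu i).eval t| ≤ C * ((N : ℝ) ^ (k + 1))⁻¹ := by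
  obtain ⟨Λ, hΛ, hquasi⟩ := exists_abs_sub_eval_le_of_isGaussRadauProj k
  refine ⟨(1 + Λ) * (Cd * (2 ^ (k + 1) / k.factorial + 1)), by positivity, ?_⟩
  intro N ε τ x u S E Pu hN4 _ hε _ hτ hτ_half hx _ hS hE huSE hSbound hEbound hPdeg hPmom hPend
    i hi t ht
  obtain ⟨hi1, hiN2⟩ := Finset.mem_Icc.mp hi
  have hiN : i ∈ Finset.Icc 1 N := Finset.mem_Icc.mpr ⟨hi1, hiN2.trans (Nat.div_le_self N 2)⟩
  have hτ0 : 0 ≤ τ := by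
    have : 0 ≤ Real.log N := Real.log_nonneg (by exact_mod_cast (show 1 ≤ N by omega))
    have : 0 < σ := by linarith
    rw [hτ]; positivity
  obtain ⟨hx0, hlt, hx1, hlen⟩ := shishkin_coarse_element hτ0 (by linarith) hi1 hiN2 hx
  have hI : Icc (x (i - 1)) (x i) ⊆ Icc 0 1 := Icc_subset_Icc hx0 (by linarith)
  obtain ⟨r, hr, hSr⟩ := exists_natDegree_le_abs_sub_eval_le hlt (uniqueDiffOn_Icc one_pos) hI
    (hS.of_le (by norm_cast; omega)) (hSbound (k + 1) (by omega))
  have hv : ∀ y ∈ Icc (x (i - 1)) (x i),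
      |u y - r.eval y| ≤ Cd * (2 ^ (k + 1) / k.factorial + 1) * ((N : ℝ) ^ (k + 1))⁻¹ := by
    intro y hy
    have hEy : |E y| ≤ Cd * ((N : ℝ) ^ (k + 1))⁻¹ := by
      have hE0 := hEbound 0 (by omega) y (hI hy)
      rw [pow_zero, div_one, iteratedDerivWithin_zero] at hE0
      exact hE0.trans (mul_le_mul_of_nonneg_left
        (exp_boundary_layer_le hβ hε hσ (by omega) (by rw [← hτ]; linarith [hy.2])) hCd.le)
    rw [huSE y (hI hy), add_sub_right_comm]
    calc |S y - r.eval y + E y| ≤ |S y - r.eval y| + |E y| := abs_add_le _ _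
      _ ≤ Cd * (2 / N) ^ (k + 1) / k.factorial + Cd * ((N : ℝ) ^ (k + 1))⁻¹ := by
          gcongr
          exact (hSr y hy).trans (by gcongr)
      _ = _ := by rw [div_pow]; ring
  have hu : ContinuousOn u (Icc (x (i - 1)) (x i)) :=
    ((hS.continuousOn.add hE.continuousOn).mono hI).congr fun y hy => huSE y (hI hy)
  exact (hquasi _ _ u (Pu i) r _ hlt ⟨hPdeg i hiN, hPmom i hiN, hPend i hiN⟩ hu hr hv t
    ht).trans_eq (by ring)

/-- Uniform (`L∞`) bound for the Gauss–Radau projection error on the coarse region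
of the Shishkin mesh: `sup_{x ∈ I_i} |u(x) − (P⁻u)(x)| ≤ C N^{−(k+1)}` for
`1 ≤ i ≤ N/2`, with `C` independent of `ε` and `N`. -/
theorem statement12 (k : ℕ) (hk : 1 ≤ k) (β σ Cd : ℝ)
    (hβ : 0 < β) (hσ : (k : ℝ) + 1 ≤ σ) (hCd : 0 < Cd) :
    ∃ C > 0, ∀ (N : ℕ) (ε τ : ℝ) (x : ℕ → ℝ) (u S E : ℝ → ℝ)
      (Pu : ℕ → Polynomial ℝ),
      4 ≤ N → N % 2 = 0 →
      0 < ε → ε ≤ (N : ℝ)⁻¹ →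
      τ = σ * ε / β * Real.log N → τ ≤ 1 / 2 →
      (∀ i ≤ N / 2, x i = 2 * (1 - τ) * i / N) →
      (∀ i, N / 2 < i → i ≤ N → x i = 1 - τ + 2 * τ * ((i : ℝ) - (N / 2 : ℕ)) / N) →
      ContDiffOn ℝ (k + 2 : ℕ) S (Icc 0 1) →
      ContDiffOn ℝ (k + 2 : ℕ) E (Icc 0 1) →
      (∀ t ∈ Icc (0:ℝ) 1, u t = S t + E t) →
      (∀ m ≤ k + 2, ∀ t ∈ Icc (0:ℝ) 1,
        |iteratedDerivWithin m S (Icc 0 1) t| ≤ Cd) →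
      (∀ m ≤ k + 2, ∀ t ∈ Icc (0:ℝ) 1,
        |iteratedDerivWithin m E (Icc 0 1) t| ≤
          Cd / ε ^ m * Real.exp (-β * (1 - t) / ε)) →
      (∀ i ∈ Finset.Icc 1 N, (Pu i).natDegree ≤ k) →
      (∀ i ∈ Finset.Icc 1 N, ∀ q : Polynomial ℝ, q.natDegree ≤ k - 1 →
        (∫ t in (x (i - 1))..(x i), (Pu i).eval t * q.eval t)
          = ∫ t in (x (i - 1))..(x i), u t * q.eval t) →
      (∀ i ∈ Finset.Icc 1 N, (Pu i).eval (x i) = u (x i)) →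
      ∀ i ∈ Finset.Icc 1 (N / 2), ∀ t ∈ Icc (x (i - 1)) (x i),
        |u t - (Pu i).eval t| ≤ C * ((N : ℝ) ^ (k + 1))⁻¹ :=
  statement12_general k β σ Cd hβ hσ hCd
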